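/- For every a ∈ I = [0,1], the principal map d_a : I → I defined by d_a(x) = a ⊙ x = max(0, a+x−1) is an (⊙,∨)-derivation on the standard MV-algebra I, and d_a is isotone (monotone: x ≤ y implies d_a(x) ≤ d_a(y)). -/
import Mathlib


/-- Łukasiewicz strong conjunction `x ⊙ y = max 0 (x + y - 1)` on the unit interval. -/
noncomputable def od (x y : unitInterval) : unitInterval :=
  ⟨max 0 (x.1 + y.1 - 1),
    ⟨le_max_left _ _, max_le zero_le_one (by have := x.2.2; have := y.2.2; linarith)⟩⟩

/-- Łukasiewicz strong disjunction `x ⊕ y = min 1 (x + y)` on the unit interval. -/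
noncomputable def op (x y : unitInterval) : unitInterval :=
  ⟨min 1 (x.1 + y.1),
    ⟨le_min zero_le_one (by have := x.2.1; have := y.2.1; linarith), min_le_left _ _⟩⟩

/-- `d` is an `(⊙,∨)`-derivation on the standard MV-algebra `[0,1]`:
`d (x ⊙ y) = (d x ⊙ y) ∨ (x ⊙ d y)` for all `x, y`. -/
def IsOdotDer (d : unitInterval → unitInterval) : Prop :=
  ∀ x y : unitInterval, d (od x y) = max (od (d x) y) (od x (d y))

/-- for every a ∈ [0,1], the principal map x ↦ a ⊙ x is an
(⊙,∨)-derivation and is isotone. -/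
theorem stmt7 (a : unitInterval) :
    IsOdotDer (fun x => od a x) ∧
      ∀ x y : unitInterval, x ≤ y → od a x ≤ od a y := by
  constructor
  · intro x y
    obtain ⟨a, ha0, ha1⟩ := a; obtain ⟨x, hx0, hx1⟩ := x; obtain ⟨y, hy0, hy1⟩ := y
    apply Subtype.ext
    show max 0 (a + max 0 (x + y - 1) - 1) =
      max (max 0 (max 0 (a + x - 1) + y - 1)) (max 0 (x + max 0 (a + y - 1) - 1))
    simp only [max_def]
    split_ifs <;> linarith
  · intro x y hxy
    have : a.1 + x.1 - 1 ≤ a.1 + y.1 - 1 := by have := Subtype.coe_le_coe.2 hxy; linarith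
    exact Subtype.coe_le_coe.1 (max_le_max le_rfl this)
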